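/- Let t ∈ R, t ≠ 0, set μ = (it, it, −2it), let ℓ ∈ N₀ = {0,1,2,…}, and let u2 ∈ C with u2 − μi ∉ −N₀ for i = 1,2,3 and u2 − it − ℓ ∉ −N₀. Then the function u1 ↦ (u1 + it + ℓ)² F̃0((u1,u2), μ) extends holomorphically to a neighborhood of u1 = −it − ℓ (so F̃0 has a double pole there), and its residue, i.e. the derivative of this extension at u1 = −it − ℓ, equals (4/π⁴) cos⁰(μ) · (Π_{i=1}^{3} Γ(u2 − μi)) · (1/(ℓ!)²) · (Γ(−3it−ℓ)/Γ(u2−it−ℓ)) · (2H_ℓ − 2γ + ψ(−3it−ℓ) − ψ(u2−it−ℓ)), where H_ℓ = Σ_{j=1}^{ℓ} 1/j is the ℓ-th harmonic number, γ is the Euler–Mascheroni constant, and ψ = Γ'/Γ is the digamma function. -/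

import Mathlib

open scoped BigOperators Topology

/-- `cos⁰(μ) = (2/π) Π_{i<j} cos((π/2)(μi−μj))`. -/
noncomputable def cos0 (μ : Fin 3 → ℂ) : ℂ :=
  (2 / (Real.pi : ℂ)) *
    (Complex.cos ((Real.pi : ℂ) / 2 * (μ 0 - μ 1)) *
      Complex.cos ((Real.pi : ℂ) / 2 * (μ 0 - μ 2)) *
      Complex.cos ((Real.pi : ℂ) / 2 * (μ 1 - μ 2)))

/-- `F̃0(u,μ) = (4/π⁴) cos⁰(μ) (Π_i Γ(u1+μi) Γ(u2−μi)) / Γ(u1+u2)`. -/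
noncomputable def Ftilde0 (u1 u2 : ℂ) (μ : Fin 3 → ℂ) : ℂ :=
  (4 / (Real.pi : ℂ) ^ 4) * cos0 μ *
    (∏ i, Complex.Gamma (u1 + μ i) * Complex.Gamma (u2 - μ i)) /
    Complex.Gamma (u1 + u2)
/-- The digamma function `ψ = Γ'/Γ`. -/
noncomputable def digamma (z : ℂ) : ℂ := deriv Complex.Gamma z / Complex.Gamma z

/-!
Near `u₁ = -it - ℓ` the only singular factor of `F̃0` is `Γ(u₁ + it)²` (as `t ≠ 0`, `Γ(u₁ - 2it)` is
regular there, and `1/Γ` is entire). The function `(z + ℓ) Γ(z)` extends holomorphically across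
`z = -ℓ` as `Γ(z + ℓ + 1) / ∏_{j<ℓ} (z + j)`, with value `(-1)^ℓ / ℓ!` and logarithmic derivative
`ψ(1) - ∑_{j<ℓ} 1/(j - ℓ) = H_ℓ - γ` there. So the extension `h` is a product of factors that are
holomorphic and nonzero at the pole, and `h' = h · (log h)'` gives the residue as the value times
`2 (H_ℓ - γ) + ψ(-3it - ℓ) - ψ(u₂ - it - ℓ)`.
-/

lemma logDeriv_comp_add_const {𝕜 𝕜' : Type*} [NontriviallyNormedField 𝕜]
    [NontriviallyNormedField 𝕜'] [NormedAlgebra 𝕜 𝕜'] (f : 𝕜 → 𝕜') (a x : 𝕜) :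
    logDeriv (fun z => f (z + a)) x = logDeriv f (x + a) := by
  simp only [logDeriv_apply, deriv_comp_add_const]

lemma deriv_eq_mul_logDeriv {𝕜 𝕜' : Type*} [NontriviallyNormedField 𝕜]
    [NontriviallyNormedField 𝕜'] [NormedAlgebra 𝕜 𝕜'] {f : 𝕜 → 𝕜'} {x : 𝕜} (hf : f x ≠ 0) :
    deriv f x = f x * logDeriv f x :=
  (mul_div_cancel₀ _ hf).symm

section GammaNearNegNat

open Complex hiding digamma
open Finset Filter
open scoped Nat

lemma analyticAt_Gamma {s : ℂ} (hs : ∀ m : ℕ, s ≠ -m) : AnalyticAt ℂ Gamma s := by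
  simpa only [inv_inv] using
    (differentiable_one_div_Gamma.analyticAt s).fun_inv (inv_ne_zero (Gamma_ne_zero hs))

lemma Gamma_add_nat_eq_prod_mul {z : ℂ} (hz : ∀ m : ℕ, z ≠ -m) (n : ℕ) :
    Gamma (z + n) = (∏ j ∈ range n, (z + j)) * Gamma z := by
  induction n with
  | zero => simp
  | succ n ih =>
    have hzn : z + n ≠ 0 := fun h => hz n (eq_neg_of_add_eq_zero_left h)
    rw [Nat.cast_succ, ← add_assoc, Gamma_add_one _ hzn, ih, prod_range_succ]
    ring

lemma eventually_ne_neg_natCast (n : ℕ) : ∀ᶠ z : ℂ in 𝓝[≠] (-n : ℂ), ∀ m : ℕ, z ≠ -m := by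
  filter_upwards [self_mem_nhdsWithin,
    mem_nhdsWithin_of_mem_nhds (Metric.ball_mem_nhds _ one_pos)] with z hne hball m rfl
  have hmn : (n : ℤ) - m ≠ 0 := sub_ne_zero.mpr fun h => hne (by rw [Int.ofNat_inj.mp h.symm]; rfl)
  have hnorm : ‖(n : ℂ) - m‖ = |((n - m : ℤ) : ℝ)| := by
    rw [← norm_intCast]
    push_cast
    rfl
  rw [Metric.mem_ball, dist_eq_norm, neg_sub_neg, hnorm] at hball
  exact absurd hball (not_lt.mpr (by exact_mod_cast Int.one_le_abs hmn))

/-- `(z + n) Γ(z)`, continued across its removable singularity at `z = -n`. -/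
noncomputable def gammaPoleFree (n : ℕ) (z : ℂ) : ℂ :=
  Gamma (z + (n + 1)) / ∏ j ∈ range n, (z + j)

lemma gammaPoleFree_eq {z : ℂ} (hz : ∀ m : ℕ, z ≠ -m) (n : ℕ) :
    gammaPoleFree n z = (z + n) * Gamma z := by
  have hzn : z + n ≠ 0 := fun h => hz n (eq_neg_of_add_eq_zero_left h)
  have hprod : ∏ j ∈ range n, (z + j) ≠ 0 :=
    prod_ne_zero_iff.mpr fun j _ h => hz j (eq_neg_of_add_eq_zero_left h)
  rw [gammaPoleFree, ← add_assoc, Gamma_add_one _ hzn, Gamma_add_nat_eq_prod_mul hz]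
  field_simp

lemma neg_natCast_add_natCast_of_lt {n j : ℕ} (hj : j < n) :
    (-n : ℂ) + j = -(((n - 1 - j : ℕ) : ℂ) + 1) := by
  rw [Nat.cast_sub (by omega), Nat.cast_sub (by omega)]
  push_cast
  ring

lemma prod_range_neg_natCast_add (n : ℕ) :
    ∏ j ∈ range n, ((-n : ℂ) + j) = (-1) ^ n * n ! := by
  rw [prod_congr rfl fun j hj => neg_natCast_add_natCast_of_lt (mem_range.mp hj),
    prod_range_reflect (fun k => -((k : ℂ) + 1)), prod_neg, card_range,
    ← prod_range_add_one_eq_factorial]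
  push_cast
  rfl

lemma sum_range_inv_neg_natCast_add (n : ℕ) :
    ∑ j ∈ range n, ((-n : ℂ) + j)⁻¹ = -∑ j ∈ range n, 1 / ((j : ℂ) + 1) := by
  rw [sum_congr rfl fun j hj => by rw [neg_natCast_add_natCast_of_lt (mem_range.mp hj)],
    sum_range_reflect (fun k => (-((k : ℂ) + 1))⁻¹), ← sum_neg_distrib]
  simp only [inv_neg, one_div]

lemma gammaPoleFree_neg_natCast (n : ℕ) : gammaPoleFree n (-n : ℂ) = ((-1 : ℂ) ^ n * n !)⁻¹ := by
  rw [gammaPoleFree, prod_range_neg_natCast_add, neg_add_cancel_left, Gamma_one, one_div]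

lemma analyticAt_Gamma_add_nat_add_one (n : ℕ) :
    AnalyticAt ℂ (fun z => Gamma (z + (n + 1))) (-n : ℂ) :=
  (analyticAt_Gamma (by norm_cast; simp)).fun_comp_of_eq (by fun_prop) (neg_add_cancel_left _ _)

lemma analyticAt_gammaPoleFree (n : ℕ) : AnalyticAt ℂ (gammaPoleFree n) (-n : ℂ) :=
  (analyticAt_Gamma_add_nat_add_one n).div (by fun_prop)
    (by simp [prod_range_neg_natCast_add, Nat.factorial_ne_zero])

lemma logDeriv_gammaPoleFree_neg_natCast (n : ℕ) :
    logDeriv (gammaPoleFree n) (-n : ℂ) =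
      ∑ j ∈ range n, 1 / ((j : ℂ) + 1) - Real.eulerMascheroniConstant := by
  have hfac : ∀ j ∈ range n, (-n : ℂ) + j ≠ 0 := fun j hj => by
    rw [neg_natCast_add_natCast_of_lt (mem_range.mp hj), neg_ne_zero]
    exact Nat.cast_add_one_ne_zero _
  have hnum : logDeriv (fun z => Gamma (z + (n + 1))) (-n : ℂ) = -Real.eulerMascheroniConstant := by
    rw [logDeriv_comp_add_const, neg_add_cancel_left]
    exact digamma_one
  have hden : logDeriv (fun z : ℂ => ∏ j ∈ range n, (z + j)) (-n : ℂ) =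
      ∑ j ∈ range n, ((-n : ℂ) + j)⁻¹ := by
    rw [logDeriv_prod hfac (fun j _ => by fun_prop)]
    simp [logDeriv_apply]
  unfold gammaPoleFree
  rw [logDeriv_div (g := fun z : ℂ => ∏ j ∈ range n, (z + j)) _ (by simp [Gamma_one])
    (prod_ne_zero_iff.mpr hfac)
    (analyticAt_Gamma_add_nat_add_one n).differentiableAt (by fun_prop), hnum, hden,
    sum_range_inv_neg_natCast_add]
  ring

lemma analyticAt_gammaPoleFree_comp_add (n : ℕ) (a : ℂ) :
    AnalyticAt ℂ (fun u => gammaPoleFree n (u + a)) (-a - n) :=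
  (analyticAt_gammaPoleFree n).fun_comp_of_eq (by fun_prop) (by ring)

lemma analyticAt_Gamma_comp_add {b z : ℂ} (hb : ∀ m : ℕ, z + b ≠ -m) :
    AnalyticAt ℂ (fun u => Gamma (u + b)) z :=
  (analyticAt_Gamma hb).fun_comp (f := fun u => u + b) (by fun_prop)

variable {n : ℕ} {a b c : ℂ} (hb : ∀ m : ℕ, -a - n + b ≠ -m) (hc : ∀ m : ℕ, -a - n + c ≠ -m)
include hb hc

lemma logDeriv_gammaPoleFree_sq_mul_Gamma_div_Gamma :
    logDeriv (fun u => gammaPoleFree n (u + a) ^ 2 * Gamma (u + b) / Gamma (u + c)) (-a - n) =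
      2 * (∑ j ∈ range n, 1 / ((j : ℂ) + 1) - Real.eulerMascheroniConstant) +
        logDeriv Gamma (-a - n + b) - logDeriv Gamma (-a - n + c) := by
  have hpa : -a - n + a = -n := by ring
  have hg := (analyticAt_gammaPoleFree_comp_add n a).differentiableAt
  have hg0 : gammaPoleFree n (-a - n + a) ≠ 0 := by
    rw [hpa, gammaPoleFree_neg_natCast]
    simp [Nat.factorial_ne_zero]
  rw [logDeriv_div (f := fun u => gammaPoleFree n (u + a) ^ 2 * Gamma (u + b))
      (g := fun u => Gamma (u + c)) _ (mul_ne_zero (pow_ne_zero 2 hg0) (Gamma_ne_zero hb))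
      (Gamma_ne_zero hc)
      ((hg.pow 2).mul (analyticAt_Gamma_comp_add hb).differentiableAt)
      (analyticAt_Gamma_comp_add hc).differentiableAt,
    logDeriv_mul (f := fun u => gammaPoleFree n (u + a) ^ 2)
      (g := fun u => Gamma (u + b)) _ (pow_ne_zero 2 hg0) (Gamma_ne_zero hb) (hg.pow 2)
      (analyticAt_Gamma_comp_add hb).differentiableAt,
    logDeriv_fun_pow hg, logDeriv_comp_add_const, logDeriv_comp_add_const,
    logDeriv_comp_add_const, hpa, logDeriv_gammaPoleFree_neg_natCast]
  push_cast
  ring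

theorem exists_analyticAt_eq_sq_mul_Gamma_sq_mul_Gamma_div_Gamma (C : ℂ) :
    ∃ h : ℂ → ℂ, AnalyticAt ℂ h (-a - n) ∧
      (∀ᶠ u in 𝓝[≠] (-a - n),
        h u = (u + a + n) ^ 2 * (C * Gamma (u + a) ^ 2 * Gamma (u + b) / Gamma (u + c))) ∧
      deriv h (-a - n) = C * ((n ! : ℂ) ^ 2)⁻¹ * (Gamma (-a - n + b) / Gamma (-a - n + c)) *
        (2 * (∑ j ∈ range n, 1 / ((j : ℂ) + 1) - Real.eulerMascheroniConstant) +
          logDeriv Gamma (-a - n + b) - logDeriv Gamma (-a - n + c)) := by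
  set k : ℂ → ℂ := fun u => gammaPoleFree n (u + a) ^ 2 * Gamma (u + b) / Gamma (u + c) with hk
  have hpa : -a - n + a = -n := by ring
  have hk0 : k (-a - n) = ((n ! : ℂ) ^ 2)⁻¹ * (Gamma (-a - n + b) / Gamma (-a - n + c)) := by
    simp only [hk, hpa, gammaPoleFree_neg_natCast, inv_pow, mul_pow, ← pow_mul,
      pow_mul', neg_one_sq, one_pow, one_mul]
    ring
  have hk0_ne : k (-a - n) ≠ 0 := by
    rw [hk0]
    exact mul_ne_zero (by simp [Nat.factorial_ne_zero])
      (div_ne_zero (Gamma_ne_zero hb) (Gamma_ne_zero hc))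
  have hshift : Tendsto (· + a) (𝓝[≠] (-a - n)) (𝓝[≠] (-n : ℂ)) := by
    rw [← hpa]
    exact map_add_right_nhdsNE.le
  refine ⟨fun u => C * k u, ?_, ?_, ?_⟩
  · exact analyticAt_const.mul ((((analyticAt_gammaPoleFree_comp_add n a).pow 2).mul
      (analyticAt_Gamma_comp_add hb)).div (analyticAt_Gamma_comp_add hc) (Gamma_ne_zero hc))
  · filter_upwards [hshift.eventually (eventually_ne_neg_natCast n)] with u hu
    simp only [hk, gammaPoleFree_eq hu]
    ring
  · rw [deriv_const_mul_field, deriv_eq_mul_logDeriv hk0_ne, hk0,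
      logDeriv_gammaPoleFree_sq_mul_Gamma_div_Gamma hb hc]
    ring

end GammaNearNegNat

theorem ftilde0_residue_double_pole_general (t : ℝ) (ht : t ≠ 0) (ℓ : ℕ) (u2 : ℂ)
    (hu2c : ∀ k : ℕ, u2 - Complex.I * (t : ℂ) - (ℓ : ℂ) ≠ -(k : ℂ)) :
    ∃ h : ℂ → ℂ, AnalyticAt ℂ h (-(Complex.I * (t : ℂ)) - (ℓ : ℂ)) ∧
      (∀ᶠ u1 in 𝓝[≠] (-(Complex.I * (t : ℂ)) - (ℓ : ℂ)),
        h u1 = (u1 + Complex.I * (t : ℂ) + (ℓ : ℂ)) ^ 2 *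
          Ftilde0 u1 u2
            ![Complex.I * (t : ℂ), Complex.I * (t : ℂ), -2 * Complex.I * (t : ℂ)]) ∧
      deriv h (-(Complex.I * (t : ℂ)) - (ℓ : ℂ))
        = (4 / (Real.pi : ℂ) ^ 4) *
            cos0 ![Complex.I * (t : ℂ), Complex.I * (t : ℂ), -2 * Complex.I * (t : ℂ)] *
            (∏ i, Complex.Gamma (u2 -
              ![Complex.I * (t : ℂ), Complex.I * (t : ℂ), -2 * Complex.I * (t : ℂ)] i)) *
            (1 / ((Nat.factorial ℓ : ℂ)) ^ 2) *
            (Complex.Gamma (-3 * Complex.I * (t : ℂ) - (ℓ : ℂ)) /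
              Complex.Gamma (u2 - Complex.I * (t : ℂ) - (ℓ : ℂ))) *
            (2 * (∑ j ∈ Finset.range ℓ, (1 : ℂ) / ((j : ℂ) + 1))
              - 2 * (Real.eulerMascheroniConstant : ℂ)
              + digamma (-3 * Complex.I * (t : ℂ) - (ℓ : ℂ))
              - digamma (u2 - Complex.I * (t : ℂ) - (ℓ : ℂ))) := by
  set μ : Fin 3 → ℂ := ![Complex.I * t, Complex.I * t, -2 * Complex.I * t] with hμ
  have hb : ∀ m : ℕ, -(Complex.I * t) - ℓ + -2 * Complex.I * t ≠ -m := fun m hm => by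
    have him : -t + -(2 * t) = 0 := by simpa using congrArg Complex.im hm
    exact ht (by linarith)
  have hc : ∀ m : ℕ, -(Complex.I * t) - ℓ + u2 ≠ -m := fun m hm =>
    hu2c m (by linear_combination hm)
  obtain ⟨h, h_analytic, h_eq, h_deriv⟩ :=
    exists_analyticAt_eq_sq_mul_Gamma_sq_mul_Gamma_div_Gamma hb hc
      (4 / (Real.pi : ℂ) ^ 4 * cos0 μ * ∏ i, Complex.Gamma (u2 - μ i))
  refine ⟨h, h_analytic, h_eq.mono fun u1 hu1 => ?_, ?_⟩
  · rw [hu1, Ftilde0, Fin.prod_univ_three, Fin.prod_univ_three]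
    simp only [hμ, Matrix.cons_val_zero, Matrix.cons_val_one, Matrix.cons_val_two,
      Matrix.head_cons, Matrix.tail_cons]
    ring
  · rw [h_deriv, show -(Complex.I * t) - ℓ + -2 * Complex.I * t = -3 * Complex.I * t - ℓ by ring,
      show -(Complex.I * t) - ℓ + u2 = u2 - Complex.I * t - ℓ by ring]
    simp only [digamma, logDeriv_apply]
    ring

/-- The residue of `F̃0` at the double pole `u1 = −it − ℓ` for `μ = (it,it,−2it)`:
there is a holomorphic extension `h` of `u1 ↦ (u1+it+ℓ)² F̃0((u1,u2),μ)` near `u1 = −it−ℓ`,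
and the residue `h'(−it−ℓ)` is given explicitly. -/
theorem ftilde0_residue_double_pole (t : ℝ) (ht : t ≠ 0) (ℓ : ℕ) (u2 : ℂ)
    (hu2a : ∀ k : ℕ, u2 - Complex.I * (t : ℂ) ≠ -(k : ℂ))
    (hu2b : ∀ k : ℕ, u2 + 2 * Complex.I * (t : ℂ) ≠ -(k : ℂ))
    (hu2c : ∀ k : ℕ, u2 - Complex.I * (t : ℂ) - (ℓ : ℂ) ≠ -(k : ℂ)) :
    ∃ h : ℂ → ℂ, AnalyticAt ℂ h (-(Complex.I * (t : ℂ)) - (ℓ : ℂ)) ∧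
      (∀ᶠ u1 in 𝓝[≠] (-(Complex.I * (t : ℂ)) - (ℓ : ℂ)),
        h u1 = (u1 + Complex.I * (t : ℂ) + (ℓ : ℂ)) ^ 2 *
          Ftilde0 u1 u2
            ![Complex.I * (t : ℂ), Complex.I * (t : ℂ), -2 * Complex.I * (t : ℂ)]) ∧
      deriv h (-(Complex.I * (t : ℂ)) - (ℓ : ℂ))
        = (4 / (Real.pi : ℂ) ^ 4) *
            cos0 ![Complex.I * (t : ℂ), Complex.I * (t : ℂ), -2 * Complex.I * (t : ℂ)] *
            (∏ i, Complex.Gamma (u2 -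
              ![Complex.I * (t : ℂ), Complex.I * (t : ℂ), -2 * Complex.I * (t : ℂ)] i)) *
            (1 / ((Nat.factorial ℓ : ℂ)) ^ 2) *
            (Complex.Gamma (-3 * Complex.I * (t : ℂ) - (ℓ : ℂ)) /
              Complex.Gamma (u2 - Complex.I * (t : ℂ) - (ℓ : ℂ))) *
            (2 * (∑ j ∈ Finset.range ℓ, (1 : ℂ) / ((j : ℂ) + 1))
              - 2 * (Real.eulerMascheroniConstant : ℂ)
              + digamma (-3 * Complex.I * (t : ℂ) - (ℓ : ℂ))
              - digamma (u2 - Complex.I * (t : ℂ) - (ℓ : ℂ))) :=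
  ftilde0_residue_double_pole_general t ht ℓ u2 hu2c
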